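/- arXiv:1601.07596 — 3 statements merged into one kernel-verified Lean document; each statement's English description precedes it below -/
import Mathlib

section
/- (Score decomposition) Let f : B^n → R^d be a vector Mk Landscape, i.e., each component f_i is a finite sum of subfunctions f_i^(l), where f_i^(l) depends only on the variables in a mask w_{i,l}. Let v1, v2 ∈ B^n be two moves with disjoint supports (v1 ∧ v2 = 0) such that no subfunction mask w_{i,l} intersects both v1 and v2 (i.e., for all i, l, not both w_{i,l} ∧ v1 ≠ 0 and w_{i,l} ∧ v2 ≠ 0). Then S_{v1 ∨ v2}(x) = S_{v1}(x) + S_{v2}(x) for all x ∈ B^n, where S_v(x) = f(x ⊕ v) − f(x). -/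
def bxor3 {n : ℕ} (x v : Fin n → Bool) : Fin n → Bool := fun i => xor (x i) (v i)
def band3 {n : ℕ} (x w : Fin n → Bool) : Fin n → Bool := fun i => x i && w i
def bor3 {n : ℕ} (x w : Fin n → Bool) : Fin n → Bool := fun i => x i || w i
def bzero3 (n : ℕ) : Fin n → Bool := fun _ => false

theorem score_decomposition {n d : ℕ}
    (m : Fin d → ℕ)
    -- subfunctions and their masks
    (g : ∀ i : Fin d, Fin (m i) → (Fin n → Bool) → ℝ)
    (w : ∀ i : Fin d, Fin (m i) → (Fin n → Bool))
    -- the vector Mk Landscape: each component is the sum of its subfunctions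
    (f : Fin d → (Fin n → Bool) → ℝ)
    (hf : ∀ i x, f i x = ∑ l, g i l x)
    -- each subfunction depends only on the variables in its mask
    (hdep : ∀ i l, ∀ x y : Fin n → Bool, band3 x (w i l) = band3 y (w i l) → g i l x = g i l y)
    (v1 v2 : Fin n → Bool)
    -- disjoint supports
    (hdisj : band3 v1 v2 = bzero3 n)
    -- no subfunction mask intersects both v1 and v2
    (hsep : ∀ i l, ¬ (band3 (w i l) v1 ≠ bzero3 n ∧ band3 (w i l) v2 ≠ bzero3 n)) :
    ∀ (x : Fin n → Bool) (i : Fin d),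
      f i (bxor3 x (bor3 v1 v2)) - f i x
        = (f i (bxor3 x v1) - f i x) + (f i (bxor3 x v2) - f i x) := by
  intro x i
  simp only [hf, ← Finset.sum_sub_distrib, ← Finset.sum_add_distrib]
  apply Finset.sum_congr rfl
  intro l _
  -- per-subfunction identity
  rcases not_and_or.mp (hsep i l) with h1 | h2
  · -- w ∧ v1 = 0
    push_neg at h1
    have key : ∀ j : Fin n, w i l j = true → v1 j = false := by
      intro j hw
      have := congrFun h1 j
      simp [band3, bzero3, hw] at this
      exact this
    have e1 : g i l (bxor3 x v1) = g i l x := by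
      apply hdep
      funext j
      simp only [band3, bxor3]
      by_cases hw : w i l j = true
      · simp [key j hw]
      · simp at hw; simp [hw]
    have e2 : g i l (bxor3 x (bor3 v1 v2)) = g i l (bxor3 x v2) := by
      apply hdep
      funext j
      simp only [band3, bxor3, bor3]
      by_cases hw : w i l j = true
      · simp [key j hw]
      · simp at hw; simp [hw]
    rw [e1, e2]; ring
  · -- w ∧ v2 = 0
    push_neg at h2
    have key : ∀ j : Fin n, w i l j = true → v2 j = false := by
      intro j hw
      have := congrFun h2 j
      simp [band3, bzero3, hw] at this
      exact this
    have e1 : g i l (bxor3 x v2) = g i l x := by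
      apply hdep
      funext j
      simp only [band3, bxor3]
      by_cases hw : w i l j = true
      · simp [key j hw]
      · simp at hw; simp [hw]
    have e2 : g i l (bxor3 x (bor3 v1 v2)) = g i l (bxor3 x v1) := by
      apply hdep
      funext j
      simp only [band3, bxor3, bor3]
      by_cases hw : w i l j = true
      · simp [key j hw]
      · simp at hw; simp [hw]
    rw [e1, e2]; ring
end

section
/- Let f : B^n → R^d be a vector Mk Landscape with co-occurrence graph G on the n variables (two variables are adjacent iff they appear together in some subfunction mask). If v ∈ B^n is a move such that the induced subgraph G[v] on the support of v is disconnected, then v can be written as v = v1 ∨ v2 with v1, v2 nonempty, disjoint, and with no edge of G between v1 and v2, so that S_v(x) = S_{v1}(x) + S_{v2}(x) for all x. -/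
/-! A disconnected support splits into a connected component `T` of `G[v]` and the rest.
Since every mask is a clique of `G`, no mask meets both parts; a subfunction whose mask
avoids one part only sees the flip of the other, so each subfunction's score is additive
over the two parts, and hence so is the score of the sum. -/

def bxor4 {n : ℕ} (x v : Fin n → Bool) : Fin n → Bool := fun i => xor (x i) (v i)
def band4 {n : ℕ} (x w : Fin n → Bool) : Fin n → Bool := fun i => x i && w i
def bor4 {n : ℕ} (x w : Fin n → Bool) : Fin n → Bool := fun i => x i || w i
def bzero4 (n : ℕ) : Fin n → Bool := fun _ => false

namespace SimpleGraph

theorem exists_separation_of_not_connected_induce {α : Type*} {G : SimpleGraph α} {S : Set α}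
    (hS : S.Nonempty) (h : ¬ (G.induce S).Connected) :
    ∃ T ⊆ S, T.Nonempty ∧ (S \ T).Nonempty ∧
      ∀ a ∈ T, ∀ b ∈ S \ T, ¬ G.Adj a b := by
  have : Nonempty S := hS.to_subtype
  obtain ⟨a, b, hab⟩ : ∃ a b : S, ¬ (G.induce S).Reachable a b := by
    by_contra! hpre
    exact h ⟨hpre⟩
  refine ⟨{j | ∃ hj : j ∈ S, (G.induce S).Reachable a ⟨j, hj⟩}, fun j ⟨hj, _⟩ => hj,
    ⟨a, a.2, .rfl⟩, ⟨b, b.2, fun ⟨_, hr⟩ => hab hr⟩, ?_⟩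
  rintro p ⟨hp, hap⟩ q ⟨hq, hnq⟩ hpq
  exact hnq ⟨hq, hap.trans (Adj.reachable (G := G.induce S) hpq)⟩

end SimpleGraph

section BoolVectors

variable {n : ℕ}

theorem exists_bor4_eq_of_subset_support (v : Fin n → Bool) (T : Set (Fin n))
    (hT : T ⊆ {j | v j = true}) :
    ∃ v1 v2 : Fin n → Bool, v = bor4 v1 v2 ∧ band4 v1 v2 = bzero4 n ∧
      {j | v1 j = true} = T ∧ {j | v2 j = true} = {j | v j = true} \ T := by
  classical
  refine ⟨fun j => decide (j ∈ T), fun j => v j && !decide (j ∈ T), ?_, ?_, ?_, ?_⟩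
  · funext j
    by_cases hj : j ∈ T
    · simp [bor4, hj, show v j = true from hT hj]
    · simp [bor4, hj]
  · funext j
    by_cases hj : j ∈ T <;> simp [band4, bzero4, hj]
  · ext j; simp
  · ext j; simp

theorem bxor4_bor4_of_band4_eq_bzero4 (x v1 v2 : Fin n → Bool) (h : band4 v1 v2 = bzero4 n) :
    bxor4 x (bor4 v1 v2) = bxor4 (bxor4 x v1) v2 := by
  funext j
  have hj := congrFun h j
  simp only [band4, bzero4] at hj
  cases hx : x j <;> cases h1 : v1 j <;> cases h2 : v2 j <;> simp_all [bxor4, bor4]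

theorem bor4_comm (v1 v2 : Fin n → Bool) : bor4 v1 v2 = bor4 v2 v1 := by
  funext j; simp [bor4, Bool.or_comm]

theorem band4_comm (v1 v2 : Fin n → Bool) : band4 v1 v2 = band4 v2 v1 := by
  funext j; simp [band4, Bool.and_comm]

theorem apply_bxor4_of_mask_avoids {β : Type*} {h : (Fin n → Bool) → β} {w u : Fin n → Bool}
    (hdep : ∀ x y, band4 x w = band4 y w → h x = h y) (hu : ∀ j, w j = true → u j = false)
    (x : Fin n → Bool) : h (bxor4 x u) = h x := by
  refine hdep _ _ (funext fun j => ?_)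
  cases hw : w j
  · simp [band4, hw]
  · simp [band4, bxor4, hu j hw]

theorem mask_avoids_of_not_adj {G : SimpleGraph (Fin n)} {w v1 v2 : Fin n → Bool}
    (hclique : ∀ a b, a ≠ b → w a = true → w b = true → G.Adj a b)
    (hdisj : band4 v1 v2 = bzero4 n)
    (hsep : ∀ a b, v1 a = true → v2 b = true → ¬ G.Adj a b) :
    (∀ j, w j = true → v1 j = false) ∨ (∀ j, w j = true → v2 j = false) := by
  by_contra! hboth
  obtain ⟨⟨a, hwa, ha⟩, ⟨b, hwb, hb⟩⟩ := hboth
  simp only [ne_eq, Bool.not_eq_false] at ha hb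
  have hab : a ≠ b := by
    rintro rfl
    simpa [band4, bzero4, ha, hb] using congrFun hdisj a
  exact hsep a b ha hb (hclique a b hab hwa hwb)

end BoolVectors

section Score

variable {n : ℕ} {β : Type*} [AddCommGroup β]

theorem score_bor4_of_mask_avoids_right {h : (Fin n → Bool) → β} {w v1 v2 : Fin n → Bool}
    (hdep : ∀ x y, band4 x w = band4 y w → h x = h y) (hdisj : band4 v1 v2 = bzero4 n)
    (hv2 : ∀ j, w j = true → v2 j = false) (x : Fin n → Bool) :
    h (bxor4 x (bor4 v1 v2)) - h x = (h (bxor4 x v1) - h x) + (h (bxor4 x v2) - h x) := by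
  rw [bxor4_bor4_of_band4_eq_bzero4 x v1 v2 hdisj, apply_bxor4_of_mask_avoids hdep hv2,
    apply_bxor4_of_mask_avoids hdep hv2]
  abel

theorem score_bor4_of_mask_avoids {h : (Fin n → Bool) → β} {w v1 v2 : Fin n → Bool}
    (hdep : ∀ x y, band4 x w = band4 y w → h x = h y) (hdisj : band4 v1 v2 = bzero4 n)
    (hsep : (∀ j, w j = true → v1 j = false) ∨ (∀ j, w j = true → v2 j = false))
    (x : Fin n → Bool) :
    h (bxor4 x (bor4 v1 v2)) - h x = (h (bxor4 x v1) - h x) + (h (bxor4 x v2) - h x) := by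
  rcases hsep with hv1 | hv2
  · rw [bor4_comm, add_comm]
    exact score_bor4_of_mask_avoids_right hdep (band4_comm v1 v2 ▸ hdisj) hv1 x
  · exact score_bor4_of_mask_avoids_right hdep hdisj hv2 x

theorem score_sum_bor4_of_masks_avoid {ι : Type*} (s : Finset ι)
    {g : ι → (Fin n → Bool) → β} {w : ι → Fin n → Bool} {v1 v2 : Fin n → Bool}
    (hdep : ∀ l, ∀ x y, band4 x (w l) = band4 y (w l) → g l x = g l y)
    (hdisj : band4 v1 v2 = bzero4 n)
    (hsep : ∀ l, (∀ j, w l j = true → v1 j = false) ∨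
      (∀ j, w l j = true → v2 j = false))
    (x : Fin n → Bool) :
    ∑ l ∈ s, g l (bxor4 x (bor4 v1 v2)) - ∑ l ∈ s, g l x
      = (∑ l ∈ s, g l (bxor4 x v1) - ∑ l ∈ s, g l x)
        + (∑ l ∈ s, g l (bxor4 x v2) - ∑ l ∈ s, g l x) := by
  simp only [← Finset.sum_sub_distrib, ← Finset.sum_add_distrib]
  exact Finset.sum_congr rfl fun l _ => score_bor4_of_mask_avoids (hdep l) hdisj (hsep l) x

end Score

theorem disconnected_support_score_decomposition {n d : ℕ}
    (m : Fin d → ℕ)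
    (g : ∀ i : Fin d, Fin (m i) → (Fin n → Bool) → ℝ)
    (w : ∀ i : Fin d, Fin (m i) → (Fin n → Bool))
    (f : Fin d → (Fin n → Bool) → ℝ)
    (hf : ∀ i x, f i x = ∑ l, g i l x)
    (hdep : ∀ i l, ∀ x y : Fin n → Bool, band4 x (w i l) = band4 y (w i l) → g i l x = g i l y)
    -- the co-occurrence graph
    (G : SimpleGraph (Fin n))
    (hG : ∀ a b, G.Adj a b ↔ a ≠ b ∧ ∃ i l, w i l a = true ∧ w i l b = true)
    (v : Fin n → Bool)
    (hne : ({j | v j = true} : Set (Fin n)).Nonempty)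
    -- the induced subgraph on the support of v is disconnected
    (hdis : ¬ (G.induce {j | v j = true}).Connected) :
    ∃ v1 v2 : Fin n → Bool,
      v = bor4 v1 v2 ∧
      band4 v1 v2 = bzero4 n ∧
      ({j | v1 j = true} : Set (Fin n)).Nonempty ∧
      ({j | v2 j = true} : Set (Fin n)).Nonempty ∧
      (∀ a b : Fin n, v1 a = true → v2 b = true → ¬ G.Adj a b) ∧
      (∀ (x : Fin n → Bool) (i : Fin d),
        f i (bxor4 x v) - f i x
          = (f i (bxor4 x v1) - f i x) + (f i (bxor4 x v2) - f i x)) := by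
  obtain ⟨T, hTS, hT, hST, hsep⟩ :=
    SimpleGraph.exists_separation_of_not_connected_induce hne hdis
  obtain ⟨v1, v2, rfl, hdisj, h1, h2⟩ := exists_bor4_eq_of_subset_support v T hTS
  have hnoedge : ∀ a b, v1 a = true → v2 b = true → ¬ G.Adj a b := fun a b ha hb =>
    hsep a (h1.subset ha) b (h2.subset hb)
  have hmask : ∀ i l, (∀ j, w i l j = true → v1 j = false) ∨
      (∀ j, w i l j = true → v2 j = false) := fun i l =>
    mask_avoids_of_not_adj (fun a b hab ha hb => (hG a b).2 ⟨hab, i, l, ha, hb⟩) hdisj hnoedge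
  refine ⟨v1, v2, rfl, hdisj, h1 ▸ hT, h2 ▸ hST, hnoedge, fun x i => ?_⟩
  simp only [hf]
  exact score_sum_bor4_of_masks_avoid _ (hdep i) hdisj (hmask i) x
end

section
/- Let f : B^n → R^d, let w ∈ R^d have all strictly positive components, and suppose every strong improving move v with |v| ≤ r at a solution x has its score expressible as a sum of scores of moves in a set M^r. If no move in M^r is w-improving at x, then there is no strong improving move within Hamming distance r of x; equivalently, x is a local optimum of the Hamming ball of radius r with respect to dominance. -/
def bxor11 {n : ℕ} (x v : Fin n → Bool) : Fin n → Bool := fun i => xor (x i) (v i)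

def score11 {n d : ℕ} (f : Fin d → (Fin n → Bool) → ℝ) (i : Fin d) (v x : Fin n → Bool) : ℝ :=
  f i (bxor11 x v) - f i x

/-- Hamming weight of a move. -/
def weight11 {n : ℕ} (v : Fin n → Bool) : ℕ :=
  (Finset.univ.filter (fun j => v j = true)).card

/-- strong improving move -/
def strong11 {n d : ℕ} (f : Fin d → (Fin n → Bool) → ℝ) (v x : Fin n → Bool) : Prop :=
  (∀ i, 0 ≤ score11 f i v x) ∧ ∃ i, 0 < score11 f i v x

/-- `y` dominates `x`. -/
def dom11 {n d : ℕ} (f : Fin d → (Fin n → Bool) → ℝ) (y x : Fin n → Bool) : Prop :=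
  (∀ i, f i x ≤ f i y) ∧ ∃ j, f j x < f j y

theorem no_w_improving_implies_local_optimum {n d : ℕ}
    (f : Fin d → (Fin n → Bool) → ℝ) (w : Fin d → ℝ)
    (hw : ∀ i, 0 < w i) (r : ℕ) (x : Fin n → Bool)
    (M : Set (Fin n → Bool))
    -- every strong improving move of weight ≤ r has its score expressible as a
    -- sum of scores of moves of M
    (hdecomp : ∀ v : Fin n → Bool, weight11 v ≤ r → strong11 f v x →
      ∃ (j : ℕ) (u : Fin j → (Fin n → Bool)), (∀ l, u l ∈ M) ∧
        ∀ i : Fin d, score11 f i v x = ∑ l : Fin j, score11 f i (u l) x)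
    -- no move of M is w-improving at x
    (hno : ∀ u ∈ M, ¬ (0 < ∑ i : Fin d, w i * score11 f i u x)) :
    (∀ v : Fin n → Bool, weight11 v ≤ r → ¬ strong11 f v x) ∧
    (∀ y : Fin n → Bool, hammingDist x y ≤ r → ¬ dom11 f y x) := by
  have main : ∀ v : Fin n → Bool, weight11 v ≤ r → ¬ strong11 f v x := by
    intro v hvr hs
    obtain ⟨j, u, huM, hsum⟩ := hdecomp v hvr hs
    have hpos : 0 < ∑ i : Fin d, w i * score11 f i v x := by
      obtain ⟨i0, hi0⟩ := hs.2
      apply Finset.sum_pos' (fun i _ => mul_nonneg (hw i).le (hs.1 i))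
      exact ⟨i0, Finset.mem_univ _, mul_pos (hw i0) hi0⟩
    have heq : (∑ i : Fin d, w i * score11 f i v x)
        = ∑ l : Fin j, ∑ i : Fin d, w i * score11 f i (u l) x := by
      rw [Finset.sum_comm]
      simp only [hsum, Finset.mul_sum]
    rw [heq] at hpos
    have : ∃ l, 0 < ∑ i : Fin d, w i * score11 f i (u l) x := by
      by_contra h
      push_neg at h
      exact absurd hpos (not_lt.2 (Finset.sum_nonpos fun l _ => h l))
    obtain ⟨l, hl⟩ := this
    exact hno (u l) (huM l) hl
  refine ⟨main, fun y hy hdom => ?_⟩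
  set v : Fin n → Bool := fun i => xor (x i) (y i) with hv
  have hxv : bxor11 x v = y := by
    funext i
    simp [bxor11, hv, Bool.xor_assoc]
  have hwv : weight11 v = hammingDist x y := by
    unfold weight11 hammingDist
    congr 1
    ext i
    cases hxi : x i <;> cases hyi : y i <;> simp [hv, hxi, hyi]
  apply main v (hwv ▸ hy)
  refine ⟨fun i => ?_, ?_⟩
  · simp [score11, hxv, hdom.1 i]
  · obtain ⟨i, hi⟩ := hdom.2
    exact ⟨i, by simp [score11, hxv, hi]⟩
end
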